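/- arXiv:2211.00618 — 8 statements merged into one kernel-verified Lean document; each statement's English description precedes it below -/
import Mathlib

section
/- Let X be a j×j positive definite real matrix partitioned in blocks as X = [[X₁, X₂],[X₂ᵀ, X₄]] where X₁ is i×i with i < j, and let Y be an i×i symmetric matrix. Then X⁻¹ ⪰ [[Y, 0],[0, 0]] if and only if X₁⁻¹ ⪰ Y; similarly X⁻¹ ≻ [[Y, 0],[0, 0]] if and only if X₁⁻¹ ≻ Y. -/
open Matrix

section Aux

variable {n m : Type*} [Fintype n] [Fintype m] [DecidableEq n] [DecidableEq m]

lemma aux_psd_conj {M : Matrix n n ℝ} (hM : M.PosSemidef) (B : Matrix n m ℝ) :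
    (Bᵀ * M * B).PosSemidef := by
  rw [← conjTranspose_eq_transpose_of_trivial]
  exact hM.conjTranspose_mul_mul_same B

lemma aux_pd_conj {M : Matrix n n ℝ} (hM : M.PosDef) (B : Matrix n n ℝ) [Invertible B] :
    (Bᵀ * M * B).PosDef := by
  rw [← conjTranspose_eq_transpose_of_trivial]
  refine PosDef.of_dotProduct_mulVec_pos (isHermitian_conjTranspose_mul_mul B hM.1) fun x hx => ?_
  have hBx : B *ᵥ x ≠ 0 := fun h0 => hx <|
    Matrix.mulVec_injective_of_invertible B (by simpa using h0)
  simpa only [star_mulVec, dotProduct_mulVec, vecMul_vecMul] using hM.dotProduct_mulVec_pos hBx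

lemma aux_conj_eq (M B : Matrix n n ℝ) [Invertible B] :
    (⅟B)ᵀ * (Bᵀ * M * B) * ⅟B = M := by
  simp only [Matrix.mul_assoc, mul_invOf_self, Matrix.mul_one]
  rw [← Matrix.mul_assoc, ← transpose_mul, mul_invOf_self, transpose_one, Matrix.one_mul]

lemma aux_psd_conj_iff (M B : Matrix n n ℝ) [Invertible B] :
    (Bᵀ * M * B).PosSemidef ↔ M.PosSemidef := by
  refine ⟨fun h => ?_, fun h => aux_psd_conj h B⟩
  have := aux_psd_conj h (⅟B)
  rwa [aux_conj_eq] at this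

lemma aux_pd_conj_iff (M B : Matrix n n ℝ) [Invertible B] :
    (Bᵀ * M * B).PosDef ↔ M.PosDef := by
  refine ⟨fun h => ?_, fun h => aux_pd_conj h B⟩
  have := aux_pd_conj h (⅟B)
  rwa [aux_conj_eq] at this

lemma aux_pd_block₁ {A : Matrix n n ℝ} {B : Matrix n m ℝ} {C : Matrix m n ℝ}
    {D : Matrix m m ℝ} (h : (fromBlocks A B C D).PosDef) : A.PosDef := by
  refine PosDef.of_dotProduct_mulVec_pos (isHermitian_fromBlocks_iff.mp h.1).1 fun v hv => ?_
  have hne : Sum.elim v (0 : m → ℝ) ≠ 0 := fun h0 =>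
    hv (funext fun k => congrFun h0 (Sum.inl k))
  have := h.dotProduct_mulVec_pos hne
  simpa [fromBlocks_mulVec, Function.star_sumElim, sumElim_dotProduct_sumElim] using this

lemma aux_pd_blocks {N : Matrix n n ℝ} {S : Matrix m m ℝ} (hS : S.PosDef) :
    (fromBlocks N 0 0 S).PosDef ↔ N.PosDef := by
  constructor
  · exact fun h => aux_pd_block₁ h
  · intro hN
    refine PosDef.of_dotProduct_mulVec_pos (isHermitian_fromBlocks_iff.mpr ⟨hN.1, by simp, by simp, hS.1⟩) fun x hx => ?_
    have hgen : ∀ (a : n → ℝ) (b : m → ℝ), star (a ⊕ᵥ b) ⬝ᵥ (fromBlocks N 0 0 S) *ᵥ (a ⊕ᵥ b) =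
        star a ⬝ᵥ N *ᵥ a + star b ⬝ᵥ S *ᵥ b := by
      intro a b
      simp [fromBlocks_mulVec, Function.star_sumElim, sumElim_dotProduct_sumElim]
    have hform : star x ⬝ᵥ (fromBlocks N 0 0 S) *ᵥ x =
        star (x ∘ Sum.inl) ⬝ᵥ N *ᵥ (x ∘ Sum.inl) + star (x ∘ Sum.inr) ⬝ᵥ S *ᵥ (x ∘ Sum.inr) := by
      conv_lhs => rw [← Sum.elim_comp_inl_inr x]
      exact hgen _ _
    rw [hform]
    by_cases ha : x ∘ Sum.inl = 0
    · have hb : x ∘ Sum.inr ≠ 0 := by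
        intro hb
        exact hx (funext fun k => by cases k with
          | inl k => exact congrFun ha k
          | inr k => exact congrFun hb k)
      rw [ha]
      simpa using hS.dotProduct_mulVec_pos hb
    · exact add_pos_of_pos_of_nonneg (hN.dotProduct_mulVec_pos ha) (hS.posSemidef.dotProduct_mulVec_nonneg _)

lemma aux_schur_pd {A : Matrix n n ℝ} {B : Matrix n m ℝ} {D : Matrix m m ℝ}
    (h : (fromBlocks A B Bᵀ D).PosDef) (hA : A.PosDef) [Invertible A] :
    (D - Bᵀ * A⁻¹ * B).PosDef := by
  have hBH : Bᴴ = Bᵀ := conjTranspose_eq_transpose_of_trivial B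
  rw [← hBH] at h ⊢
  have hpsd : (D - Bᴴ * A⁻¹ * B).PosSemidef :=
    (PosDef.fromBlocks₁₁ B D hA).mp h.posSemidef
  refine PosDef.of_dotProduct_mulVec_pos hpsd.1 fun y hy => ?_
  have hne : (-((A⁻¹ * B) *ᵥ y) ⊕ᵥ y) ≠ 0 := fun h0 =>
    hy (funext fun k => congrFun h0 (Sum.inr k))
  have := h.dotProduct_mulVec_pos hne
  rw [dotProduct_mulVec, schur_complement_eq₁₁ B D _ _ hA.1, neg_add_cancel, dotProduct_zero,
    zero_add] at this
  rw [dotProduct_mulVec]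
  exact this

end Aux

/-- Block positive definite matrix inverse Loewner comparison with a corner block. -/
theorem stmt1 {i l : ℕ} (hl : 0 < l)
    (X₁ : Matrix (Fin i) (Fin i) ℝ) (X₂ : Matrix (Fin i) (Fin l) ℝ)
    (X₄ : Matrix (Fin l) (Fin l) ℝ) (Y : Matrix (Fin i) (Fin i) ℝ)
    (hX : (fromBlocks X₁ X₂ X₂ᵀ X₄).PosDef) (hY : Yᵀ = Y) :
    (((fromBlocks X₁ X₂ X₂ᵀ X₄)⁻¹ - fromBlocks Y 0 0 0).PosSemidef ↔
      (X₁⁻¹ - Y).PosSemidef) ∧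
    (((fromBlocks X₁ X₂ X₂ᵀ X₄)⁻¹ - fromBlocks Y 0 0 0).PosDef ↔
      (X₁⁻¹ - Y).PosDef) := by
  have hX₁ : X₁.PosDef := aux_pd_block₁ hX
  have hd₁ : IsUnit X₁.det := hX₁.det_pos.ne'.isUnit
  haveI : Invertible X₁ := invertibleOfIsUnitDet _ hd₁
  have hdM : IsUnit (fromBlocks X₁ X₂ X₂ᵀ X₄).det := hX.det_pos.ne'.isUnit
  haveI : Invertible (fromBlocks X₁ X₂ X₂ᵀ X₄) := invertibleOfIsUnitDet _ hdM
  have hMsym : (fromBlocks X₁ X₂ X₂ᵀ X₄)ᵀ = fromBlocks X₁ X₂ X₂ᵀ X₄ := by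
    have := hX.1
    rwa [Matrix.IsHermitian, conjTranspose_eq_transpose_of_trivial] at this
  have hX₁sym : X₁ᵀ = X₁ := by
    have := hX₁.1
    rwa [Matrix.IsHermitian, conjTranspose_eq_transpose_of_trivial] at this
  have hS : (X₄ - X₂ᵀ * X₁⁻¹ * X₂).PosDef := aux_schur_pd hX hX₁
  haveI : Invertible (X₄ - X₂ᵀ * X₁⁻¹ * X₂) := invertibleOfIsUnitDet _ hS.det_pos.ne'.isUnit
  haveI : Invertible (1 : Matrix (Fin i) (Fin i) ℝ) := invertibleOne
  haveI : Invertible (1 : Matrix (Fin l) (Fin l) ℝ) := invertibleOne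
  haveI : Invertible (fromBlocks (1 : Matrix (Fin i) (Fin i) ℝ) (X₁⁻¹ * X₂) 0
      (1 : Matrix (Fin l) (Fin l) ℝ)) := fromBlocksZero₂₁Invertible _ _ _
  -- congruence by M
  have e1 : (fromBlocks X₁ X₂ X₂ᵀ X₄)ᵀ *
        ((fromBlocks X₁ X₂ X₂ᵀ X₄)⁻¹ - fromBlocks Y 0 0 0) * fromBlocks X₁ X₂ X₂ᵀ X₄ =
      fromBlocks X₁ X₂ X₂ᵀ X₄ -
        fromBlocks X₁ X₂ X₂ᵀ X₄ * fromBlocks Y 0 0 0 * fromBlocks X₁ X₂ X₂ᵀ X₄ := by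
    rw [hMsym, Matrix.mul_sub, Matrix.mul_nonsing_inv _ hdM, Matrix.sub_mul, Matrix.one_mul]
  -- block LDL decomposition
  have e2 : fromBlocks X₁ X₂ X₂ᵀ X₄ -
        fromBlocks X₁ X₂ X₂ᵀ X₄ * fromBlocks Y 0 0 0 * fromBlocks X₁ X₂ X₂ᵀ X₄ =
      (fromBlocks 1 (X₁⁻¹ * X₂) 0 1)ᵀ *
        fromBlocks (X₁ - X₁ * Y * X₁) 0 0 (X₄ - X₂ᵀ * X₁⁻¹ * X₂) *
        fromBlocks 1 (X₁⁻¹ * X₂) 0 1 := by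
    rw [fromBlocks_transpose]
    simp only [transpose_one, transpose_zero, transpose_mul, transpose_nonsing_inv, hX₁sym,
      fromBlocks_multiply, Matrix.mul_one, Matrix.one_mul, Matrix.mul_zero, Matrix.zero_mul,
      add_zero, zero_add, Matrix.mul_sub, Matrix.sub_mul, Matrix.mul_assoc,
      Matrix.mul_nonsing_inv_cancel_left _ _ hd₁, Matrix.nonsing_inv_mul_cancel_left _ _ hd₁,
      Matrix.nonsing_inv_mul _ hd₁, Matrix.mul_nonsing_inv _ hd₁]
    rw [sub_eq_add_neg, fromBlocks_neg, fromBlocks_add, fromBlocks_inj]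
    refine ⟨by abel, by abel, by abel, by abel⟩
  -- congruence by X₁
  have e3 : X₁ᵀ * (X₁⁻¹ - Y) * X₁ = X₁ - X₁ * Y * X₁ := by
    rw [hX₁sym, Matrix.mul_sub, Matrix.mul_nonsing_inv _ hd₁, Matrix.sub_mul, Matrix.one_mul]
  have e4 : (fromBlocks (X₁ - X₁ * Y * X₁) 0 0 (X₄ - X₂ᵀ * X₁⁻¹ * X₂)).PosSemidef ↔
      (X₁ - X₁ * Y * X₁).PosSemidef := by
    have := PosDef.fromBlocks₂₂ (X₁ - X₁ * Y * X₁) (0 : Matrix (Fin i) (Fin l) ℝ) hS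
    simpa using this
  constructor
  · rw [← aux_psd_conj_iff ((fromBlocks X₁ X₂ X₂ᵀ X₄)⁻¹ - fromBlocks Y 0 0 0)
      (fromBlocks X₁ X₂ X₂ᵀ X₄), e1, e2,
      aux_psd_conj_iff _ (fromBlocks 1 (X₁⁻¹ * X₂) 0 1), e4,
      ← e3, aux_psd_conj_iff]
  · rw [← aux_pd_conj_iff ((fromBlocks X₁ X₂ X₂ᵀ X₄)⁻¹ - fromBlocks Y 0 0 0)
      (fromBlocks X₁ X₂ X₂ᵀ X₄), e1, e2,
      aux_pd_conj_iff _ (fromBlocks 1 (X₁⁻¹ * X₂) 0 1), aux_pd_blocks hS,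
      ← e3, aux_pd_conj_iff]
end

section
/- Let M_k be the 2n×2n matrix M_k = [[A_k + B_k B_kᵀ A_k^{-T} Q_k, -B_k B_kᵀ A_k^{-T}],[-A_k^{-T} Q_k, A_k^{-T}]] with A_k invertible and Q_k symmetric. Then M_k satisfies M_kᵀ J̄ M_k = J̄ and M_k J̄ M_kᵀ = J̄, where J̄ = [[0, I_n],[-I_n, 0]]. -/
open Matrix

/-- The Hamiltonian transition matrix M_k is symplectic. -/
theorem stmt4 {n p : ℕ} (A : Matrix (Fin n) (Fin n) ℝ) (B : Matrix (Fin n) (Fin p) ℝ)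
    (Q : Matrix (Fin n) (Fin n) ℝ) (hA : IsUnit A.det) (hQ : Qᵀ = Q) :
    (fromBlocks (A + B * Bᵀ * (A⁻¹)ᵀ * Q) (-(B * Bᵀ * (A⁻¹)ᵀ)) (-((A⁻¹)ᵀ * Q)) ((A⁻¹)ᵀ))ᵀ *
        fromBlocks (0 : Matrix (Fin n) (Fin n) ℝ) 1 (-1) 0 *
        (fromBlocks (A + B * Bᵀ * (A⁻¹)ᵀ * Q) (-(B * Bᵀ * (A⁻¹)ᵀ)) (-((A⁻¹)ᵀ * Q)) ((A⁻¹)ᵀ))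
      = fromBlocks (0 : Matrix (Fin n) (Fin n) ℝ) 1 (-1) 0 ∧
    (fromBlocks (A + B * Bᵀ * (A⁻¹)ᵀ * Q) (-(B * Bᵀ * (A⁻¹)ᵀ)) (-((A⁻¹)ᵀ * Q)) ((A⁻¹)ᵀ)) *
        fromBlocks (0 : Matrix (Fin n) (Fin n) ℝ) 1 (-1) 0 *
        (fromBlocks (A + B * Bᵀ * (A⁻¹)ᵀ * Q) (-(B * Bᵀ * (A⁻¹)ᵀ)) (-((A⁻¹)ᵀ * Q)) ((A⁻¹)ᵀ))ᵀ
      = fromBlocks (0 : Matrix (Fin n) (Fin n) ℝ) 1 (-1) 0 := by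
  have h1 : A * A⁻¹ = 1 := mul_nonsing_inv A hA
  have h2 : A⁻¹ * A = 1 := nonsing_inv_mul A hA
  have h3 : Aᵀ * (A⁻¹)ᵀ = 1 := by rw [← transpose_mul, h2, transpose_one]
  have h4 : (A⁻¹)ᵀ * Aᵀ = 1 := by rw [← transpose_mul, h1, transpose_one]
  have h1' : ∀ X : Matrix (Fin n) (Fin n) ℝ, A * (A⁻¹ * X) = X := by
    intro X; rw [← Matrix.mul_assoc, h1, Matrix.one_mul]
  have h3' : ∀ X : Matrix (Fin n) (Fin n) ℝ, Aᵀ * ((A⁻¹)ᵀ * X) = X := by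
    intro X; rw [← Matrix.mul_assoc, h3, Matrix.one_mul]
  constructor <;>
  · rw [fromBlocks_transpose, fromBlocks_multiply, fromBlocks_multiply, fromBlocks_inj]
    simp [transpose_mul, transpose_add, hQ, Matrix.mul_add, Matrix.add_mul,
      Matrix.mul_assoc, h1, h2, h3, h4, h1', h3']
end

section
/- Let g be the map sending a symmetric n×n matrix Π (with I + BBᵀΠ invertible, for a fixed n×p matrix B) to Π(I + BBᵀΠ)⁻¹. Then g is injective: if Π₁ and Π₂ are symmetric with I + BBᵀΠ₁ and I + BBᵀΠ₂ invertible and Π₁(I + BBᵀΠ₁)⁻¹ = Π₂(I + BBᵀΠ₂)⁻¹, then Π₁ = Π₂. -/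
open Matrix

/-- The map Π ↦ Π(I + BBᵀΠ)⁻¹ is injective on symmetric matrices with
I + BBᵀΠ invertible. -/
theorem stmt7 {n p : ℕ} (B : Matrix (Fin n) (Fin p) ℝ)
    (Pi1 Pi2 : Matrix (Fin n) (Fin n) ℝ) (h1 : Pi1ᵀ = Pi1) (h2 : Pi2ᵀ = Pi2)
    (hu1 : IsUnit (1 + B * Bᵀ * Pi1).det) (hu2 : IsUnit (1 + B * Bᵀ * Pi2).det)
    (heq : Pi1 * (1 + B * Bᵀ * Pi1)⁻¹ = Pi2 * (1 + B * Bᵀ * Pi2)⁻¹) :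
    Pi1 = Pi2 := by
  set A := B * Bᵀ with hA
  have m1 := Matrix.mul_nonsing_inv (1 + A * Pi1) hu1
  have m2 := Matrix.mul_nonsing_inv (1 + A * Pi2) hu2
  have i1 := Matrix.nonsing_inv_mul (1 + A * Pi1) hu1
  have i2 := Matrix.nonsing_inv_mul (1 + A * Pi2) hu2
  have k1 : (1 : Matrix (Fin n) (Fin n) ℝ) - A * (Pi1 * (1 + A * Pi1)⁻¹)
      = (1 + A * Pi1)⁻¹ := by
    nth_rewrite 1 [← m1]; noncomm_ring
  have k2 : (1 : Matrix (Fin n) (Fin n) ℝ) - A * (Pi2 * (1 + A * Pi2)⁻¹)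
      = (1 + A * Pi2)⁻¹ := by
    nth_rewrite 1 [← m2]; noncomm_ring
  have hinv : (1 + A * Pi1)⁻¹ = (1 + A * Pi2)⁻¹ := by
    rw [← k1, ← k2, heq]
  have hsum : (1 + A * Pi1) = (1 + A * Pi2) := by
    rw [← Matrix.nonsing_inv_nonsing_inv _ hu1, hinv,
      Matrix.nonsing_inv_nonsing_inv _ hu2]
  calc Pi1 = Pi1 * (1 + A * Pi1)⁻¹ * (1 + A * Pi1) := by
        rw [Matrix.mul_assoc, i1, Matrix.mul_one]
    _ = Pi2 * (1 + A * Pi2)⁻¹ * (1 + A * Pi2) := by rw [heq, hsum]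
    _ = Pi2 := by rw [Matrix.mul_assoc, i2, Matrix.mul_one]
end

section
/- Consequently, for a given symmetric initial condition Π₀ and invertible matrices A_k, if the Riccati difference equation Π_k = A_kᵀ Π_{k+1} (I + B_k B_kᵀ Π_{k+1})⁻¹ A_k + Q_k admits a symmetric solution (Π_k)_{k=0}^N (with each I + B_k B_kᵀ Π_{k+1} invertible), then this solution is unique. -/
open Matrix

lemma riccati_step_inj {n p : ℕ} (A : Matrix (Fin n) (Fin n) ℝ) (B : Matrix (Fin n) (Fin p) ℝ)
    (X1 X2 : Matrix (Fin n) (Fin n) ℝ) (hA : IsUnit A.det)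
    (h1 : IsUnit (1 + B * Bᵀ * X1).det) (h2 : IsUnit (1 + B * Bᵀ * X2).det)
    (heq : Aᵀ * X1 * (1 + B * Bᵀ * X1)⁻¹ * A = Aᵀ * X2 * (1 + B * Bᵀ * X2)⁻¹ * A) :
    X1 = X2 := by
  have hAT : IsUnit Aᵀ.det := by rwa [Matrix.det_transpose]
  set U1 := 1 + B * Bᵀ * X1 with hU1def
  set U2 := 1 + B * Bᵀ * X2 with hU2def
  -- cancel A on both sides
  have hM : X1 * U1⁻¹ = X2 * U2⁻¹ := by
    have h := congrArg (fun Z => (Aᵀ)⁻¹ * Z * A⁻¹) heq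
    simp only [Matrix.mul_assoc] at h
    rw [Matrix.nonsing_inv_mul_cancel_left _ _ hAT, Matrix.nonsing_inv_mul_cancel_left _ _ hAT]
      at h
    simpa only [← Matrix.mul_assoc, Matrix.mul_nonsing_inv_cancel_right _ _ hA] using h
  set M := X1 * U1⁻¹ with hMdef
  have hX1 : M * U1 = X1 := Matrix.nonsing_inv_mul_cancel_right _ _ h1
  have hX2 : M * U2 = X2 := by rw [hM]; exact Matrix.nonsing_inv_mul_cancel_right _ _ h2
  have key1 : (1 + X1 * (B * Bᵀ)) * M = X1 := by
    have h' : X1 * (U1 * U1⁻¹) = X1 := by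
      rw [Matrix.mul_nonsing_inv _ h1, Matrix.mul_one]
    calc (1 + X1 * (B * Bᵀ)) * M = X1 * (U1 * U1⁻¹) := by
          rw [hMdef, hU1def]; noncomm_ring
      _ = X1 := h'
  set D := X1 - X2 with hDdef
  have hD : D = M * (B * Bᵀ * D) := by
    calc D = M * U1 - M * U2 := by rw [hX1, hX2]
      _ = M * (B * Bᵀ * D) := by rw [hU1def, hU2def, hDdef]; noncomm_ring
  have h2' : (1 + X1 * (B * Bᵀ)) * D = X1 * (B * Bᵀ * D) := by
    calc (1 + X1 * (B * Bᵀ)) * D = (1 + X1 * (B * Bᵀ)) * M * (B * Bᵀ * D) := by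
          rw [Matrix.mul_assoc, ← hD]
      _ = X1 * (B * Bᵀ * D) := by rw [key1]
  have h3 : D + X1 * (B * Bᵀ * D) = X1 * (B * Bᵀ * D) := by
    calc D + X1 * (B * Bᵀ * D) = (1 + X1 * (B * Bᵀ)) * D := by noncomm_ring
      _ = X1 * (B * Bᵀ * D) := h2'
  have hD0 : D = 0 := add_eq_right.mp h3
  exact sub_eq_zero.mp hD0

/-- Uniqueness of the symmetric solution of the Riccati difference equation
anchored at a given initial condition Π₀. -/
theorem stmt8 {n p N : ℕ} (A : ℕ → Matrix (Fin n) (Fin n) ℝ)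
    (B : ℕ → Matrix (Fin n) (Fin p) ℝ) (Q : ℕ → Matrix (Fin n) (Fin n) ℝ)
    (hA : ∀ k < N, IsUnit (A k).det) (hQ : ∀ k < N, (Q k)ᵀ = Q k)
    (P1 P2 : ℕ → Matrix (Fin n) (Fin n) ℝ)
    (hsym1 : ∀ k ≤ N, (P1 k)ᵀ = P1 k) (hsym2 : ∀ k ≤ N, (P2 k)ᵀ = P2 k)
    (hu1 : ∀ k < N, IsUnit (1 + B k * (B k)ᵀ * P1 (k+1)).det)
    (hu2 : ∀ k < N, IsUnit (1 + B k * (B k)ᵀ * P2 (k+1)).det)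
    (hrec1 : ∀ k < N, P1 k = (A k)ᵀ * P1 (k+1) * (1 + B k * (B k)ᵀ * P1 (k+1))⁻¹ * A k + Q k)
    (hrec2 : ∀ k < N, P2 k = (A k)ᵀ * P2 (k+1) * (1 + B k * (B k)ᵀ * P2 (k+1))⁻¹ * A k + Q k)
    (h0 : P1 0 = P2 0) :
    ∀ k ≤ N, P1 k = P2 k := by
  intro k
  induction k with
  | zero => intro _; exact h0
  | succ k ih =>
    intro hk
    have hkN : k < N := Nat.lt_of_succ_le hk
    have hPk : P1 k = P2 k := ih (Nat.le_of_lt hkN)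
    have heq : (A k)ᵀ * P1 (k+1) * (1 + B k * (B k)ᵀ * P1 (k+1))⁻¹ * A k
        = (A k)ᵀ * P2 (k+1) * (1 + B k * (B k)ᵀ * P2 (k+1))⁻¹ * A k := by
      have h1 := hrec1 k hkN
      have h2 := hrec2 k hkN
      rw [hPk, h2] at h1
      exact add_right_cancel h1.symm
    exact riccati_step_inj (A k) (B k) _ _ (hA k hkN) (hu1 k hkN) (hu2 k hkN) heq
end

section
/- Suppose for k = 0,…,N−1 the Riccati difference equation Π_k = A_kᵀ Π_{k+1}(I + B_k B_kᵀ Π_{k+1})⁻¹ A_k + Q_k admits a solution with I + B_k B_kᵀ Π_{k+1} invertible. Then, for each k, I_p + B_kᵀ Π_{k+1} B_k = (I_p − B_kᵀ A_k^{-T}(Π_k − Q_k) A_k^{-1} B_k)⁻¹. In particular, I_p + B_kᵀ Π_{k+1} B_k ≻ 0 if and only if I_p − B_kᵀ A_k^{-T}(Π_k − Q_k) A_k^{-1} B_k ≻ 0. -/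
open Matrix

/-- One-step identity: I_p + BᵀΠ_{k+1}B = (I_p − BᵀA^{-T}(Π_k − Q)A⁻¹B)⁻¹,
and the corresponding positive-definiteness equivalence. -/
theorem stmt9 {n p : ℕ} (A Pi Pi' Q : Matrix (Fin n) (Fin n) ℝ)
    (B : Matrix (Fin n) (Fin p) ℝ)
    (hA : IsUnit A.det) (hQ : Qᵀ = Q) (hPi' : Pi'ᵀ = Pi')
    (hu : IsUnit (1 + B * Bᵀ * Pi').det)
    (hrec : Pi = Aᵀ * Pi' * (1 + B * Bᵀ * Pi')⁻¹ * A + Q) :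
    IsUnit ((1 : Matrix (Fin p) (Fin p) ℝ) - Bᵀ * (A⁻¹)ᵀ * (Pi - Q) * A⁻¹ * B).det ∧
    (1 : Matrix (Fin p) (Fin p) ℝ) + Bᵀ * Pi' * B =
      ((1 : Matrix (Fin p) (Fin p) ℝ) - Bᵀ * (A⁻¹)ᵀ * (Pi - Q) * A⁻¹ * B)⁻¹ ∧
    (((1 : Matrix (Fin p) (Fin p) ℝ) + Bᵀ * Pi' * B).PosDef ↔
      ((1 : Matrix (Fin p) (Fin p) ℝ) - Bᵀ * (A⁻¹)ᵀ * (Pi - Q) * A⁻¹ * B).PosDef) := by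
  set C := (1 + B * Bᵀ * Pi')⁻¹ with hC
  have hCl : (1 + B * Bᵀ * Pi') * C = 1 := mul_nonsing_inv _ hu
  have hCr : C * (1 + B * Bᵀ * Pi') = 1 := nonsing_inv_mul _ hu
  have hAl : A * A⁻¹ = 1 := mul_nonsing_inv _ hA
  have hPQ : Pi - Q = Aᵀ * Pi' * C * A := by rw [hrec]; abel
  have h1 : (A⁻¹)ᵀ * Aᵀ = 1 := by rw [← transpose_mul, hAl, transpose_one]
  have hM : (1 : Matrix (Fin p) (Fin p) ℝ) - Bᵀ * (A⁻¹)ᵀ * (Pi - Q) * A⁻¹ * B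
      = 1 - Bᵀ * Pi' * C * B := by
    rw [hPQ]
    have key : Bᵀ * (A⁻¹)ᵀ * (Aᵀ * Pi' * C * A) * A⁻¹ * B = Bᵀ * Pi' * C * B := by
      have e : Bᵀ * (A⁻¹)ᵀ * (Aᵀ * Pi' * C * A) * A⁻¹ * B
          = Bᵀ * (((A⁻¹)ᵀ * Aᵀ) * (Pi' * (C * ((A * A⁻¹) * B)))) := by
        simp only [Matrix.mul_assoc]
      rw [e, h1, hAl, Matrix.one_mul, Matrix.one_mul]
      simp only [Matrix.mul_assoc]
    rw [key]
  set M := (1 : Matrix (Fin p) (Fin p) ℝ) - Bᵀ * Pi' * C * B with hMdef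
  have key1 : ((1 : Matrix (Fin p) (Fin p) ℝ) + Bᵀ * Pi' * B) * M = 1 := by
    have h : Pi' * C + Pi' * (B * (Bᵀ * (Pi' * C))) = Pi' := by
      calc Pi' * C + Pi' * (B * (Bᵀ * (Pi' * C)))
          = Pi' * ((1 + B * Bᵀ * Pi') * C) := by
            simp only [Matrix.add_mul, Matrix.mul_add, Matrix.one_mul, Matrix.mul_assoc]
        _ = Pi' := by rw [hCl, Matrix.mul_one]
    calc ((1 : Matrix (Fin p) (Fin p) ℝ) + Bᵀ * Pi' * B) * M
        = 1 + Bᵀ * (Pi' * B) - Bᵀ * ((Pi' * C + Pi' * (B * (Bᵀ * (Pi' * C)))) * B) := by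
          rw [hMdef]
          simp only [Matrix.mul_add, Matrix.add_mul, Matrix.mul_sub, Matrix.sub_mul,
            Matrix.mul_one, Matrix.one_mul, Matrix.mul_assoc]
          try abel
      _ = 1 := by rw [h]; abel
  have key2 : M * ((1 : Matrix (Fin p) (Fin p) ℝ) + Bᵀ * Pi' * B) = 1 := by
    have h : Pi' * C + Pi' * (C * (B * (Bᵀ * Pi'))) = Pi' := by
      calc Pi' * C + Pi' * (C * (B * (Bᵀ * Pi')))
          = Pi' * (C * (1 + B * Bᵀ * Pi')) := by
            simp only [Matrix.add_mul, Matrix.mul_add, Matrix.mul_one, Matrix.mul_assoc]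
        _ = Pi' := by rw [hCr, Matrix.mul_one]
    calc M * ((1 : Matrix (Fin p) (Fin p) ℝ) + Bᵀ * Pi' * B)
        = 1 + Bᵀ * (Pi' * B) - Bᵀ * ((Pi' * C + Pi' * (C * (B * (Bᵀ * Pi')))) * B) := by
          rw [hMdef]
          simp only [Matrix.mul_add, Matrix.add_mul, Matrix.mul_sub, Matrix.sub_mul,
            Matrix.mul_one, Matrix.one_mul, Matrix.mul_assoc]
          try abel
      _ = 1 := by rw [h]; abel
  have hMu : IsUnit M.det := Matrix.isUnit_det_of_left_inverse key1
  have hinv : M⁻¹ = 1 + Bᵀ * Pi' * B := Matrix.inv_eq_left_inv key1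
  rw [hM]
  refine ⟨hMu, by rw [hinv], ?_⟩
  have hS : (1 + Bᵀ * Pi' * B) = M⁻¹ := hinv.symm
  constructor
  · intro h
    have := h.inv
    rwa [hS, Matrix.nonsing_inv_nonsing_inv _ hMu] at this
  · intro h
    rw [hS]
    exact h.inv
end

section
/- Let P¹_k and P²_k solve the Riccati difference equations P¹_k = A_kᵀ P¹_{k+1}(I + Υ_k P¹_{k+1})⁻¹ A_k + Ω_k and P²_k = A_kᵀ P²_{k+1}(I + Γ_k P²_{k+1})⁻¹ A_k + Q_k with P¹_0 = P²_0 = 0, where all A_k are invertible and Υ_k, Γ_k, Ω_k, Q_k ⪰ 0. If Ω_k ⪰ Q_k and Υ_k ⪯ Γ_k for all k in the common interval of existence I, then P¹_k ⪰ P²_k ⪰ 0 for k ∈ I, k ≤ 0, and P¹_k ⪯ P²_k ⪯ 0 for k ∈ I, k ≥ 0. -/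
open Matrix

variable {n : ℕ}

private lemma sym_of_psd {M : Matrix (Fin n) (Fin n) ℝ} (h : M.PosSemidef) : Mᵀ = M := by
  have := h.1
  rwa [Matrix.IsHermitian, conjTranspose_eq_transpose_of_trivial] at this

private lemma psd_conj {M : Matrix (Fin n) (Fin n) ℝ} (h : M.PosSemidef)
    (B : Matrix (Fin n) (Fin n) ℝ) : (Bᵀ * M * B).PosSemidef := by
  simpa [conjTranspose_eq_transpose_of_trivial] using h.conjTranspose_mul_mul_same B

private lemma unit_det {X U : Matrix (Fin n) (Fin n) ℝ} (hX : X.PosSemidef)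
    (hU : U.PosSemidef) : IsUnit (1 + U * X).det := by
  rw [isUnit_iff_ne_zero]
  intro hdet
  obtain ⟨v, hv, hv0⟩ := (Matrix.exists_mulVec_eq_zero_iff).mpr hdet
  have h1 : v + U *ᵥ (X *ᵥ v) = 0 := by
    simpa [Matrix.add_mulVec, ← Matrix.mulVec_mulVec, Matrix.one_mulVec] using hv0
  have h2 : (X *ᵥ v) ⬝ᵥ v + (X *ᵥ v) ⬝ᵥ (U *ᵥ (X *ᵥ v)) = 0 := by
    have := congrArg (fun w => (X *ᵥ v) ⬝ᵥ w) h1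
    simpa [dotProduct_add] using this
  have ha : 0 ≤ v ⬝ᵥ (X *ᵥ v) := by simpa using hX.dotProduct_mulVec_nonneg v
  have hb : 0 ≤ (X *ᵥ v) ⬝ᵥ (U *ᵥ (X *ᵥ v)) := by simpa using hU.dotProduct_mulVec_nonneg (X *ᵥ v)
  rw [dotProduct_comm] at h2
  have hXv0 : v ⬝ᵥ (X *ᵥ v) = 0 := by linarith
  have : X *ᵥ v = 0 := by
    have := hX.dotProduct_mulVec_zero_iff v
    simpa [hXv0] using this
  rw [this, Matrix.mulVec_zero, add_zero] at h1
  exact hv h1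

private lemma det_C {X U : Matrix (Fin n) (Fin n) ℝ} (hXs : Xᵀ = X) (hUs : Uᵀ = U)
    (hdet : IsUnit (1 + U * X).det) : IsUnit (1 + X * U).det := by
  have h : (1 + U * X)ᵀ = 1 + X * U := by
    rw [Matrix.transpose_add, Matrix.transpose_one, Matrix.transpose_mul, hXs, hUs]
  rw [← h, Matrix.det_transpose]
  exact hdet

private lemma comm_f {X U : Matrix (Fin n) (Fin n) ℝ} (hXs : Xᵀ = X) (hUs : Uᵀ = U)
    (hdet : IsUnit (1 + U * X).det) :
    X * (1 + U * X)⁻¹ = (1 + X * U)⁻¹ * X := by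
  have detC := det_C hXs hUs hdet
  have key : (1 + X * U) * (X * (1 + U * X)⁻¹) = X := by
    have h1 : (1 + X * U) * X = X * (1 + U * X) := by noncomm_ring
    rw [← mul_assoc, h1, mul_assoc, Matrix.mul_nonsing_inv _ hdet, mul_one]
  calc X * (1 + U * X)⁻¹
      = (1 + X * U)⁻¹ * ((1 + X * U) * (X * (1 + U * X)⁻¹)) := by
        rw [← mul_assoc, Matrix.nonsing_inv_mul _ detC, one_mul]
    _ = (1 + X * U)⁻¹ * X := by rw [key]

private lemma sym_f {X U : Matrix (Fin n) (Fin n) ℝ} (hXs : Xᵀ = X) (hUs : Uᵀ = U)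
    (hdet : IsUnit (1 + U * X).det) :
    (X * (1 + U * X)⁻¹)ᵀ = X * (1 + U * X)⁻¹ := by
  have h : (1 + U * X)ᵀ = 1 + X * U := by
    rw [Matrix.transpose_add, Matrix.transpose_one, Matrix.transpose_mul, hXs, hUs]
  rw [Matrix.transpose_mul, Matrix.transpose_nonsing_inv, h, hXs, ← comm_f hXs hUs hdet]

private lemma psd_f {X U : Matrix (Fin n) (Fin n) ℝ} (hX : X.PosSemidef)
    (hU : U.PosSemidef) : (X * (1 + U * X)⁻¹).PosSemidef := by
  have hdet := unit_det hX hU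
  have hXs := sym_of_psd hX
  have hUs := sym_of_psd hU
  refine Matrix.PosSemidef.of_dotProduct_mulVec_nonneg ?_ ?_
  · show _ = _
    rw [conjTranspose_eq_transpose_of_trivial]
    exact sym_f hXs hUs hdet
  · intro v
    set z := (1 + U * X)⁻¹ *ᵥ v with hz
    have hv : v = z + U *ᵥ (X *ᵥ z) := by
      have : v = ((1 + U * X) * (1 + U * X)⁻¹) *ᵥ v := by
        rw [Matrix.mul_nonsing_inv _ hdet, Matrix.one_mulVec]
      calc v = ((1 + U * X) * (1 + U * X)⁻¹) *ᵥ v := this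
        _ = (1 + U * X) *ᵥ z := by rw [← Matrix.mulVec_mulVec]
        _ = z + U *ᵥ (X *ᵥ z) := by
            rw [Matrix.add_mulVec, Matrix.one_mulVec, ← Matrix.mulVec_mulVec]
    have hform : star v ⬝ᵥ (X * (1 + U * X)⁻¹) *ᵥ v
        = z ⬝ᵥ (X *ᵥ z) + (X *ᵥ z) ⬝ᵥ (U *ᵥ (X *ᵥ z)) := by
      have h1 : (X * (1 + U * X)⁻¹) *ᵥ v = X *ᵥ z := by
        rw [← Matrix.mulVec_mulVec]
      rw [h1, star_trivial]
      conv_lhs => rw [hv]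
      rw [add_dotProduct, dotProduct_comm (U *ᵥ (X *ᵥ z))]
    rw [hform]
    have ha : 0 ≤ z ⬝ᵥ (X *ᵥ z) := by simpa using hX.dotProduct_mulVec_nonneg z
    have hb : 0 ≤ (X *ᵥ z) ⬝ᵥ (U *ᵥ (X *ᵥ z)) := by simpa using hU.dotProduct_mulVec_nonneg (X *ᵥ z)
    positivity

private lemma mono_same {X1 X2 U : Matrix (Fin n) (Fin n) ℝ}
    (hΔ : (X1 - X2).PosSemidef) (hX2 : X2.PosSemidef) (hU : U.PosSemidef) :
    (X1 * (1 + U * X1)⁻¹ - X2 * (1 + U * X2)⁻¹).PosSemidef := by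
  have hX1 : X1.PosSemidef := by
    have := hΔ.add hX2; simpa using this
  have hX1s := sym_of_psd hX1
  have hX2s := sym_of_psd hX2
  have hUs := sym_of_psd hU
  have hΔs := sym_of_psd hΔ
  set Δ := X1 - X2 with hΔdef
  set B1 : Matrix (Fin n) (Fin n) ℝ := 1 + U * X1 with hB1
  set B2 : Matrix (Fin n) (Fin n) ℝ := 1 + U * X2 with hB2
  set C1 : Matrix (Fin n) (Fin n) ℝ := 1 + X1 * U with hC1
  set C2 : Matrix (Fin n) (Fin n) ℝ := 1 + X2 * U with hC2
  have u1 : IsUnit B1.det := unit_det hX1 hU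
  have u2 : IsUnit B2.det := unit_det hX2 hU
  have uc1 : IsUnit C1.det := det_C hX1s hUs u1
  have uc2 : IsUnit C2.det := det_C hX2s hUs u2
  have tB1 : (B1⁻¹)ᵀ = C1⁻¹ := by
    rw [Matrix.transpose_nonsing_inv, hB1, Matrix.transpose_add, Matrix.transpose_one,
      Matrix.transpose_mul, hX1s, hUs, ← hC1]
  have tB2 : (B2⁻¹)ᵀ = C2⁻¹ := by
    rw [Matrix.transpose_nonsing_inv, hB2, Matrix.transpose_add, Matrix.transpose_one,
      Matrix.transpose_mul, hX2s, hUs, ← hC2]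
  set D := X1 * B1⁻¹ - X2 * B2⁻¹ with hD
  -- step1 : D = C1⁻¹ * (Δ * B2⁻¹)
  have e1 : C1 * (X1 * B1⁻¹) = X1 := by
    rw [← mul_assoc, show C1 * X1 = X1 * B1 by rw [hC1, hB1]; noncomm_ring,
      mul_assoc, Matrix.mul_nonsing_inv _ u1, mul_one]
  have e : C1 * D = Δ * B2⁻¹ := by
    have hX1B2 : X1 = X1 * B2 * B2⁻¹ := by
      rw [mul_assoc, Matrix.mul_nonsing_inv _ u2, mul_one]
    calc C1 * D = C1 * (X1 * B1⁻¹) - C1 * (X2 * B2⁻¹) := by rw [hD, mul_sub]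
      _ = X1 - C1 * X2 * B2⁻¹ := by rw [e1, ← mul_assoc]
      _ = X1 * B2 * B2⁻¹ - C1 * X2 * B2⁻¹ := by rw [← hX1B2]
      _ = (X1 * B2 - C1 * X2) * B2⁻¹ := by rw [sub_mul]
      _ = Δ * B2⁻¹ := by
          rw [show X1 * B2 - C1 * X2 = Δ by rw [hB2, hC1, hΔdef]; noncomm_ring]
  have step1 : D = C1⁻¹ * (Δ * B2⁻¹) := by
    rw [← e, ← mul_assoc, Matrix.nonsing_inv_mul _ uc1, one_mul]
  -- transpose representation
  have symD : Dᵀ = D := by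
    rw [hD, Matrix.transpose_sub, hB1, hB2, sym_f hX1s hUs u1, sym_f hX2s hUs u2]
  have tC1 : (C1⁻¹)ᵀ = B1⁻¹ := by rw [← tB1, Matrix.transpose_transpose]
  have hDT : D = C2⁻¹ * (Δ * B1⁻¹) := by
    calc D = Dᵀ := symD.symm
      _ = (C1⁻¹ * (Δ * B2⁻¹))ᵀ := by rw [← step1]
      _ = (Δ * B2⁻¹)ᵀ * (C1⁻¹)ᵀ := by rw [Matrix.transpose_mul]
      _ = (B2⁻¹)ᵀ * Δᵀ * (C1⁻¹)ᵀ := by rw [Matrix.transpose_mul]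
      _ = C2⁻¹ * (Δ * B1⁻¹) := by rw [tB2, hΔs, tC1, mul_assoc]
  -- step2 : resolvent identity
  have step2 : B2⁻¹ = B1⁻¹ + B1⁻¹ * (U * (Δ * B2⁻¹)) := by
    have hsum : B2 + U * Δ = B1 := by rw [hB1, hB2, hΔdef]; noncomm_ring
    calc B2⁻¹ = B1⁻¹ * B1 * B2⁻¹ := by rw [Matrix.nonsing_inv_mul _ u1, one_mul]
      _ = B1⁻¹ * (B2 + U * Δ) * B2⁻¹ := by rw [hsum]
      _ = B1⁻¹ * B2 * B2⁻¹ + B1⁻¹ * (U * Δ) * B2⁻¹ := by rw [mul_add, add_mul]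
      _ = B1⁻¹ + B1⁻¹ * (U * (Δ * B2⁻¹)) := by
          rw [mul_assoc B1⁻¹ B2, Matrix.mul_nonsing_inv _ u2, mul_one, mul_assoc,
            mul_assoc]
  -- commutation
  have comm1 : B1⁻¹ * U = U * C1⁻¹ := by
    have h : B1 * U = U * C1 := by rw [hB1, hC1]; noncomm_ring
    calc B1⁻¹ * U = B1⁻¹ * U * (C1 * C1⁻¹) := by
          rw [Matrix.mul_nonsing_inv _ uc1, mul_one]
      _ = B1⁻¹ * (U * C1) * C1⁻¹ := by simp only [mul_assoc]
      _ = B1⁻¹ * (B1 * U) * C1⁻¹ := by rw [← h]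
      _ = U * C1⁻¹ := by rw [← mul_assoc, Matrix.nonsing_inv_mul _ u1, one_mul]
  have expand2 : Δ * B2⁻¹ = Δ * B1⁻¹ + Δ * (U * (C2⁻¹ * (Δ * B1⁻¹))) := by
    conv_lhs => rw [step2]
    rw [mul_add]
    congr 1
    have comm1' : ∀ W : Matrix (Fin n) (Fin n) ℝ,
        B1⁻¹ * (U * W) = U * (C1⁻¹ * W) := fun W => by
      rw [← mul_assoc, comm1, mul_assoc]
    rw [comm1', ← step1, hDT]
  have hfinal : D = (B1⁻¹)ᵀ * (Δ + Δ * (U * C2⁻¹) * Δ) * B1⁻¹ := by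
    rw [tB1, step1, expand2]
    simp only [add_mul, mul_add, mul_assoc]
  have hG : (U * C2⁻¹).PosSemidef := by
    have := psd_f hU hX2
    rwa [← hC2] at this
  have hK : (Δ + Δ * (U * C2⁻¹) * Δ).PosSemidef := by
    refine hΔ.add ?_
    have := psd_conj hG Δ
    rwa [hΔs] at this
  rw [hfinal]
  exact psd_conj hK B1⁻¹

private lemma conj_cancel {F M : Matrix (Fin n) (Fin n) ℝ} (hF : IsUnit F.det) :
    (Fᵀ)⁻¹ * (Fᵀ * M * F) * F⁻¹ = M := by
  have hFt : IsUnit (Fᵀ).det := by rw [Matrix.det_transpose]; exact hF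
  calc (Fᵀ)⁻¹ * (Fᵀ * M * F) * F⁻¹
      = (Fᵀ)⁻¹ * (Fᵀ * (M * (F * F⁻¹))) := by simp only [mul_assoc]
    _ = (Fᵀ)⁻¹ * (Fᵀ * M) := by rw [Matrix.mul_nonsing_inv _ hF, mul_one]
    _ = ((Fᵀ)⁻¹ * Fᵀ) * M := by rw [mul_assoc]
    _ = M := by rw [Matrix.nonsing_inv_mul _ hFt, one_mul]

private lemma mono_gamma {X2 U G : Matrix (Fin n) (Fin n) ℝ}
    (hX2 : X2.PosSemidef) (hU : U.PosSemidef) (hUG : (G - U).PosSemidef) :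
    (X2 * (1 + U * X2)⁻¹ - X2 * (1 + G * X2)⁻¹).PosSemidef := by
  have hUs := sym_of_psd hU
  have hG : G.PosSemidef := by have := hUG.add hU; simpa using this
  set Y := X2 * (1 + U * X2)⁻¹ with hYdef
  have hY : Y.PosSemidef := psd_f hX2 hU
  have hYs := sym_of_psd hY
  have hΔs := sym_of_psd hUG
  have u2 : IsUnit (1 + U * X2).det := unit_det hX2 hU
  have uG : IsUnit (1 + G * X2).det := unit_det hX2 hG
  set W := 1 + (G - U) * Y with hW
  have uΔY : IsUnit W.det := unit_det hY hUG
  have hYB : Y * (1 + U * X2) = X2 := by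
    rw [hYdef, mul_assoc, Matrix.nonsing_inv_mul _ u2, mul_one]
  have hfact : 1 + G * X2 = W * (1 + U * X2) := by
    have h : W * (1 + U * X2) = 1 + G * X2 := by
      calc W * (1 + U * X2)
          = 1 + U * X2 + (G - U) * (Y * (1 + U * X2)) := by rw [hW]; noncomm_ring
        _ = 1 + U * X2 + (G - U) * X2 := by rw [hYB]
        _ = 1 + G * X2 := by noncomm_ring
    exact h.symm
  have hred : X2 * (1 + G * X2)⁻¹ = Y * W⁻¹ := by
    rw [hfact, Matrix.mul_inv_rev, ← mul_assoc]
  have comm : Y * W⁻¹ = (1 + Y * (G - U))⁻¹ * Y := by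
    rw [hW]; exact comm_f hYs hΔs (by rw [← hW]; exact uΔY)
  have hid : Y - Y * W⁻¹ = Y * ((G - U) * (1 + Y * (G - U))⁻¹) * Y := by
    calc Y - Y * W⁻¹
        = (Y * W - Y) * W⁻¹ := by
          rw [sub_mul, mul_assoc Y W, Matrix.mul_nonsing_inv _ uΔY, mul_one]
      _ = (Y * (G - U) * Y) * W⁻¹ := by
          rw [show Y * W - Y = Y * (G - U) * Y by rw [hW]; noncomm_ring]
      _ = Y * (G - U) * (Y * W⁻¹) := by simp only [mul_assoc]
      _ = Y * (G - U) * ((1 + Y * (G - U))⁻¹ * Y) := by rw [comm]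
      _ = Y * ((G - U) * (1 + Y * (G - U))⁻¹) * Y := by simp only [mul_assoc]
  have hinner : ((G - U) * (1 + Y * (G - U))⁻¹).PosSemidef := psd_f hUG hY
  have hpsd : (Y * ((G - U) * (1 + Y * (G - U))⁻¹) * Y).PosSemidef := by
    have := psd_conj hinner Y
    rwa [hYs] at this
  rw [hred, hid]
  exact hpsd

private lemma key_lemma {X1 X2 U G : Matrix (Fin n) (Fin n) ℝ}
    (hΔ : (X1 - X2).PosSemidef) (hX2 : X2.PosSemidef)
    (hU : U.PosSemidef) (hUG : (G - U).PosSemidef) :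
    (X1 * (1 + U * X1)⁻¹ - X2 * (1 + G * X2)⁻¹).PosSemidef ∧
      (X2 * (1 + G * X2)⁻¹).PosSemidef := by
  have hG : G.PosSemidef := by have := hUG.add hU; simpa using this
  constructor
  · have h1 := mono_same hΔ hX2 hU
    have h2 := mono_gamma hX2 hU hUG
    have h3 := h1.add h2
    rwa [sub_add_sub_cancel] at h3
  · exact psd_f hX2 hG

private lemma flip_riccati {U P' Z : Matrix (Fin n) (Fin n) ℝ} (u : IsUnit (1 + U * P').det)
    (hZ : Z = -(P' * (1 + U * P')⁻¹)) :
    P' = -(Z * (1 + U * Z)⁻¹) := by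
  set B := 1 + U * P' with hB
  have e : (1 + U * Z) * B = 1 := by
    rw [hZ]
    calc (1 + U * -(P' * B⁻¹)) * B = B - U * (P' * (B⁻¹ * B)) := by noncomm_ring
      _ = B - U * P' := by rw [Matrix.nonsing_inv_mul _ u, mul_one]
      _ = 1 := by rw [hB]; noncomm_ring
  have hinv : 1 + U * Z = B⁻¹ := by
    calc 1 + U * Z = (1 + U * Z) * (B * B⁻¹) := by
          rw [Matrix.mul_nonsing_inv _ u, mul_one]
      _ = ((1 + U * Z) * B) * B⁻¹ := by rw [mul_assoc]
      _ = B⁻¹ := by rw [e, one_mul]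
  rw [hinv, Matrix.nonsing_inv_nonsing_inv _ u, hZ, neg_mul, neg_neg, mul_assoc,
    Matrix.nonsing_inv_mul _ u, mul_one]

/-- Monotonicity of solutions of two Riccati difference equations with ordered data,
anchored at zero at time 0, over the common interval of existence [a, b] ∋ 0. -/
theorem stmt10 {n : ℕ} (a b : ℤ) (ha : a ≤ 0) (hb : 0 ≤ b)
    (A Υ Γ Ω Q P1 P2 : ℤ → Matrix (Fin n) (Fin n) ℝ)
    (hA : ∀ k, IsUnit (A k).det)
    (hΥ : ∀ k, (Υ k).PosSemidef) (hΓ : ∀ k, (Γ k).PosSemidef)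
    (hΩ : ∀ k, (Ω k).PosSemidef) (hQ : ∀ k, (Q k).PosSemidef)
    (hsym1 : ∀ k, a ≤ k → k ≤ b → (P1 k)ᵀ = P1 k)
    (hsym2 : ∀ k, a ≤ k → k ≤ b → (P2 k)ᵀ = P2 k)
    (h01 : P1 0 = 0) (h02 : P2 0 = 0)
    (hu1 : ∀ k, a ≤ k → k + 1 ≤ b → IsUnit (1 + Υ k * P1 (k+1)).det)
    (hu2 : ∀ k, a ≤ k → k + 1 ≤ b → IsUnit (1 + Γ k * P2 (k+1)).det)
    (hrec1 : ∀ k, a ≤ k → k + 1 ≤ b →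
      P1 k = (A k)ᵀ * P1 (k+1) * (1 + Υ k * P1 (k+1))⁻¹ * A k + Ω k)
    (hrec2 : ∀ k, a ≤ k → k + 1 ≤ b →
      P2 k = (A k)ᵀ * P2 (k+1) * (1 + Γ k * P2 (k+1))⁻¹ * A k + Q k)
    (hOQ : ∀ k, (Ω k - Q k).PosSemidef) (hUG : ∀ k, (Γ k - Υ k).PosSemidef) :
    (∀ k, a ≤ k → k ≤ 0 → (P1 k - P2 k).PosSemidef ∧ (P2 k).PosSemidef) ∧
    (∀ k, 0 ≤ k → k ≤ b → (P2 k - P1 k).PosSemidef ∧ (-(P2 k)).PosSemidef) := by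
  constructor
  · -- backward direction
    have back : ∀ m : ℕ, a ≤ -(m : ℤ) →
        (P1 (-(m:ℤ)) - P2 (-(m:ℤ))).PosSemidef ∧ (P2 (-(m:ℤ))).PosSemidef := by
      intro m
      induction m with
      | zero =>
        intro _
        simp only [Nat.cast_zero, neg_zero]
        rw [h01, h02, sub_self]
        exact ⟨Matrix.PosSemidef.zero, Matrix.PosSemidef.zero⟩
      | succ m ih =>
        intro ham
        have hc : (-(↑(m+1):ℤ)) = -(m:ℤ) - 1 := by push_cast; ring
        rw [hc] at ham ⊢
        set k : ℤ := -(m:ℤ) - 1 with hk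
        have hk1 : k + 1 = -(m:ℤ) := by omega
        have hab : a ≤ k := ham
        have hkb : k + 1 ≤ b := by omega
        have hIH := ih (by omega)
        rw [← hk1] at hIH
        obtain ⟨hkey1, hkey2⟩ := key_lemma hIH.1 hIH.2 (hΥ k) (hUG k)
        have h1 := hrec1 k hab hkb
        have h2 := hrec2 k hab hkb
        constructor
        · have hE : P1 k - P2 k = (A k)ᵀ *
              (P1 (k+1) * (1 + Υ k * P1 (k+1))⁻¹ - P2 (k+1) * (1 + Γ k * P2 (k+1))⁻¹)
              * A k + (Ω k - Q k) := by
            rw [h1, h2]; noncomm_ring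
          rw [hE]
          exact (psd_conj hkey1 (A k)).add (hOQ k)
        · have hE : P2 k = (A k)ᵀ * (P2 (k+1) * (1 + Γ k * P2 (k+1))⁻¹) * A k + Q k := by
            rw [h2]; noncomm_ring
          rw [hE]
          exact (psd_conj hkey2 (A k)).add (hQ k)
    intro k hak hk0
    have h1 : ((-k).toNat : ℤ) = -k := Int.toNat_of_nonneg (by omega)
    have h2 := back (-k).toNat (by omega)
    rw [h1, neg_neg] at h2
    exact h2
  · -- forward direction
    have fwd : ∀ m : ℕ, (m:ℤ) ≤ b →
        (P2 (m:ℤ) - P1 (m:ℤ)).PosSemidef ∧ (-(P2 (m:ℤ))).PosSemidef := by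
      intro m
      induction m with
      | zero =>
        intro _
        simp only [Nat.cast_zero]
        rw [h01, h02, sub_self, neg_zero]
        exact ⟨Matrix.PosSemidef.zero, Matrix.PosSemidef.zero⟩
      | succ m ih =>
        intro hmb
        have hc : ((m+1:ℕ):ℤ) = (m:ℤ) + 1 := by push_cast; ring
        rw [hc] at hmb ⊢
        set k : ℤ := (m:ℤ) with hk
        have hIH := ih (by omega)
        have hab : a ≤ k := by omega
        have hkb : k + 1 ≤ b := hmb
        have h1 := hrec1 k hab hkb
        have h2 := hrec2 k hab hkb
        have uF : IsUnit (A k).det := hA k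
        set F := A k with hF
        set Z1 := (Fᵀ)⁻¹ * (Ω k - P1 k) * F⁻¹ with hZ1d
        set Z2 := (Fᵀ)⁻¹ * (Q k - P2 k) * F⁻¹ with hZ2d
        have hZ1 : Z1 = -(P1 (k+1) * (1 + Υ k * P1 (k+1))⁻¹) := by
          have e : Ω k - P1 k = -(Fᵀ * (P1 (k+1) * (1 + Υ k * P1 (k+1))⁻¹) * F) := by
            rw [h1]; noncomm_ring
          rw [hZ1d, e, mul_neg, neg_mul, conj_cancel uF]
        have hZ2 : Z2 = -(P2 (k+1) * (1 + Γ k * P2 (k+1))⁻¹) := by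
          have e : Q k - P2 k = -(Fᵀ * (P2 (k+1) * (1 + Γ k * P2 (k+1))⁻¹) * F) := by
            rw [h2]; noncomm_ring
          rw [hZ2d, e, mul_neg, neg_mul, conj_cancel uF]
        have hP1 : P1 (k+1) = -(Z1 * (1 + Υ k * Z1)⁻¹) := flip_riccati (hu1 k hab hkb) hZ1
        have hP2 : P2 (k+1) = -(Z2 * (1 + Γ k * Z2)⁻¹) := flip_riccati (hu2 k hab hkb) hZ2
        have hΔZ : (Z1 - Z2).PosSemidef := by
          have hc2 : (F⁻¹)ᵀ * ((Ω k - Q k) + (P2 k - P1 k)) * F⁻¹ = Z1 - Z2 := by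
            rw [Matrix.transpose_nonsing_inv, hZ1d, hZ2d]; noncomm_ring
          rw [← hc2]
          exact psd_conj ((hOQ k).add hIH.1) F⁻¹
        have hZ2psd : Z2.PosSemidef := by
          have hc2 : (F⁻¹)ᵀ * (Q k + -(P2 k)) * F⁻¹ = Z2 := by
            rw [Matrix.transpose_nonsing_inv, hZ2d]; noncomm_ring
          rw [← hc2]
          exact psd_conj ((hQ k).add hIH.2) F⁻¹
        obtain ⟨hkey1, hkey2⟩ := key_lemma hΔZ hZ2psd (hΥ k) (hUG k)
        constructor
        · have hE : P2 (k+1) - P1 (k+1)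
              = Z1 * (1 + Υ k * Z1)⁻¹ - Z2 * (1 + Γ k * Z2)⁻¹ := by
            rw [hP1, hP2]; noncomm_ring
          rw [hE]
          exact hkey1
        · rw [hP2, neg_neg]
          exact hkey2
    intro k h0k hkb
    have h1 : (k.toNat : ℤ) = k := Int.toNat_of_nonneg h0k
    have h2 := fwd k.toNat (by omega)
    rw [h1] at h2
    exact h2
end

section
/- Let Θ_N ≻ 0, Θ_k, Θ_i be n×n symmetric positive semidefinite matrices with Θ_N ⪰ Θ_k ⪰ Θ_i ⪰ 0, and let Π₀ be a symmetric matrix with Π₀ ≺ Θ_N⁻¹. Then the matrices (I − Θ_k Π₀) and (I − Θ_i Π₀) are invertible and (I − Θ_k Π₀)⁻¹ Θ_k ⪰ (I − Θ_i Π₀)⁻¹ Θ_i ⪰ 0. -/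
open Matrix Filter Set

namespace Stmt16Aux

variable {n : ℕ}
abbrev Mat (n : ℕ) := Matrix (Fin n) (Fin n) ℝ

lemma herm_trans {A : Mat n} (h : A.IsHermitian) : Aᵀ = A := by
  rw [← conjTranspose_eq_transpose_of_trivial]; exact h.eq

lemma star_id (x : Fin n → ℝ) : star x = x := funext fun i => star_trivial _

lemma sdot {Q : Mat n} (hQ : Qᵀ = Q) (y w : Fin n → ℝ) :
    (Q *ᵥ y) ⬝ᵥ w = y ⬝ᵥ (Q *ᵥ w) := by
  rw [dotProduct_mulVec, ← mulVec_transpose, hQ]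

lemma psd_smul {A : Mat n} (hA : A.PosSemidef) {c : ℝ} (hc : 0 ≤ c) :
    (c • A).PosSemidef := by
  refine posSemidef_iff_dotProduct_mulVec.mpr ⟨?_, fun x => ?_⟩
  · unfold Matrix.IsHermitian
    rw [conjTranspose_smul, hA.1, star_trivial]
  · rw [smul_mulVec, dotProduct_smul, smul_eq_mul]
    exact mul_nonneg hc (hA.dotProduct_mulVec_nonneg x)

lemma pd_smul {A : Mat n} (hA : A.PosDef) {c : ℝ} (hc : 0 < c) :
    (c • A).PosDef := by
  refine posDef_iff_dotProduct_mulVec.mpr ⟨?_, fun x hx => ?_⟩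
  · unfold Matrix.IsHermitian
    rw [conjTranspose_smul, hA.1, star_trivial]
  · rw [smul_mulVec, dotProduct_smul, smul_eq_mul]
    exact mul_pos hc (hA.dotProduct_mulVec_pos hx)

/-- key quadratic inequality from expanding `(x - Q y)ᵀ Q⁻¹ (x - Q y) ≥ 0`. -/
lemma key_ineq {Q : Mat n} (hQ : Q.PosDef) (x y : Fin n → ℝ) :
    2 * (x ⬝ᵥ y) - y ⬝ᵥ (Q *ᵥ y) ≤ x ⬝ᵥ (Q⁻¹ *ᵥ x) := by
  have hdet : IsUnit Q.det := hQ.det_pos.ne'.isUnit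
  have hsym : Qᵀ = Q := herm_trans hQ.1
  have h0 := hQ.inv.posSemidef.dotProduct_mulVec_nonneg (x - Q *ᵥ y)
  rw [star_id] at h0
  have hz : Q⁻¹ *ᵥ (x - Q *ᵥ y) = Q⁻¹ *ᵥ x - y := by
    rw [mulVec_sub, mulVec_mulVec, nonsing_inv_mul Q hdet, one_mulVec]
  rw [hz, sub_dotProduct, dotProduct_sub, dotProduct_sub] at h0
  have h1 : (Q *ᵥ y) ⬝ᵥ (Q⁻¹ *ᵥ x) = y ⬝ᵥ x := by
    rw [sdot hsym, mulVec_mulVec, mul_nonsing_inv Q hdet, one_mulVec]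
  have h2 : (Q *ᵥ y) ⬝ᵥ y = y ⬝ᵥ (Q *ᵥ y) := sdot hsym y y
  have h3 : x ⬝ᵥ y = y ⬝ᵥ x := dotProduct_comm x y
  linarith

/-- inverse is antitone on positive definite matrices. -/
lemma inv_antitone {P Q : Mat n} (hP : P.PosDef) (hQ : Q.PosDef)
    (h : (Q - P).PosSemidef) : (P⁻¹ - Q⁻¹).PosSemidef := by
  refine posSemidef_iff_dotProduct_mulVec.mpr ⟨hP.1.inv.sub hQ.1.inv, fun x => ?_⟩
  rw [star_id, sub_mulVec, dotProduct_sub]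
  have hdetQ : IsUnit Q.det := hQ.det_pos.ne'.isUnit
  set y := Q⁻¹ *ᵥ x with hy
  have hk := key_ineq hP x y
  have hmono := h.dotProduct_mulVec_nonneg y
  rw [star_id, sub_mulVec, dotProduct_sub] at hmono
  have hQy : Q *ᵥ y = x := by
    rw [hy, mulVec_mulVec, mul_nonsing_inv Q hdetQ, one_mulVec]
  have h1 : y ⬝ᵥ (Q *ᵥ y) = x ⬝ᵥ y := by rw [hQy, dotProduct_comm]
  have h2 : x ⬝ᵥ y = x ⬝ᵥ (Q⁻¹ *ᵥ x) := rfl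
  linarith


lemma nebot : (nhdsWithin (0:ℝ) (Ioc 0 1)).NeBot := by
  rw [← mem_closure_iff_nhdsWithin_neBot, closure_Ioc (one_ne_zero).symm]
  exact ⟨le_refl 0, zero_le_one⟩

/-- Positive semidefiniteness passes to the limit `ε → 0⁺`. -/
lemma psd_limit (M : ℝ → Mat n) (hc : ContinuousAt M 0)
    (h : ∀ ε ∈ Ioc (0:ℝ) 1, (M ε).PosSemidef) : (M 0).PosSemidef := by
  have := nebot
  have hmem : ∀ᶠ ε in nhdsWithin (0:ℝ) (Ioc 0 1), ε ∈ Ioc (0:ℝ) 1 :=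
    eventually_mem_nhdsWithin
  have hentry : ∀ i j, Tendsto (fun ε => M ε i j) (nhdsWithin (0:ℝ) (Ioc 0 1))
      (nhds (M 0 i j)) := by
    intro i j
    have h1 : Tendsto (fun A : Mat n => A i j) (nhds (M 0)) (nhds (M 0 i j)) :=
      (((continuous_apply j).comp (continuous_apply i)).tendsto (M 0))
    exact (h1.comp hc.tendsto).mono_left nhdsWithin_le_nhds
  have hsymm : ∀ i j, M 0 j i = M 0 i j := by
    intro i j
    refine tendsto_nhds_unique (f := fun ε => M ε j i) (hentry j i) ?_
    refine Tendsto.congr' ?_ (hentry i j)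
    filter_upwards [hmem] with ε hε
    have hherm := congrFun (congrFun (h ε hε).1.eq i) j
    rw [conjTranspose_apply, star_trivial] at hherm
    exact hherm.symm
  refine posSemidef_iff_dotProduct_mulVec.mpr ⟨?_, ?_⟩
  · ext i j
    rw [conjTranspose_apply, star_trivial]
    exact hsymm i j
  · intro x
    have hsx : star x = x := funext fun i => star_trivial _
    rw [hsx]
    have hq : Tendsto (fun ε => x ⬝ᵥ (M ε *ᵥ x)) (nhdsWithin (0:ℝ) (Ioc 0 1))
        (nhds (x ⬝ᵥ (M 0 *ᵥ x))) := by
      simp only [dotProduct, mulVec]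
      refine tendsto_finset_sum _ fun i _ => (tendsto_const_nhds.mul ?_)
      exact tendsto_finset_sum _ fun j _ => (hentry i j).mul tendsto_const_nhds
    refine ge_of_tendsto hq ?_
    filter_upwards [hmem] with ε hε
    have h2 := (h ε hε).dotProduct_mulVec_nonneg x
    rwa [hsx] at h2


/-- perturbation towards ΘN -/
noncomputable def pert (Θ ΘN : Mat n) (ε : ℝ) : Mat n := Θ + ε • (ΘN - Θ)

lemma pert_zero (Θ ΘN : Mat n) : pert Θ ΘN 0 = Θ := by
  simp [pert]

lemma pert_eq (Θ ΘN : Mat n) (ε : ℝ) :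
    pert Θ ΘN ε = (1 - ε) • Θ + ε • ΘN := by
  unfold pert; module

lemma sub_pert (Θ ΘN : Mat n) (ε : ℝ) :
    ΘN - pert Θ ΘN ε = (1 - ε) • (ΘN - Θ) := by
  unfold pert; module

lemma pert_sub_pert (Θi Θk ΘN : Mat n) (ε : ℝ) :
    pert Θk ΘN ε - pert Θi ΘN ε = (1 - ε) • (Θk - Θi) := by
  unfold pert; module

lemma pert_continuous (Θ ΘN : Mat n) : Continuous (pert Θ ΘN) := by
  unfold pert
  exact continuous_const.add (continuous_id.smul continuous_const)


lemma pert_posDef {Θ ΘN : Mat n} (hΘ : Θ.PosSemidef) (hΘN : ΘN.PosDef)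
    {ε : ℝ} (hε : ε ∈ Ioc (0:ℝ) 1) : (pert Θ ΘN ε).PosDef := by
  rw [pert_eq]
  exact Matrix.PosDef.posSemidef_add (psd_smul hΘ (by linarith [hε.2])) (pd_smul hΘN hε.1)

lemma pert_le {Θ ΘN : Mat n} (hNΘ : (ΘN - Θ).PosSemidef) {ε : ℝ}
    (hε : ε ∈ Ioc (0:ℝ) 1) : (ΘN - pert Θ ΘN ε).PosSemidef := by
  rw [sub_pert]
  exact psd_smul hNΘ (by linarith [hε.2])

/-- `Θ Θ_N⁻¹ Θ ⪯ Θ` for `0 ⪯ Θ ⪯ Θ_N`. -/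
lemma conj_psd {Θ ΘN : Mat n} (hΘN : ΘN.PosDef) (hΘ : Θ.PosSemidef)
    (hNΘ : (ΘN - Θ).PosSemidef) : (Θ - Θ * ΘN⁻¹ * Θ).PosSemidef := by
  have hmain := psd_limit (fun ε => pert Θ ΘN ε - pert Θ ΘN ε * ΘN⁻¹ * pert Θ ΘN ε)
    (by
      have hp := pert_continuous Θ ΘN
      exact (hp.sub ((hp.matrix_mul continuous_const).matrix_mul hp)).continuousAt)
    (by
      intro ε hε
      set P := pert Θ ΘN ε with hP
      have hPd : P.PosDef := pert_posDef hΘ hΘN hε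
      have hPs : Pᵀ = P := herm_trans hPd.1
      have hdet : IsUnit P.det := hPd.det_pos.ne'.isUnit
      refine posSemidef_iff_dotProduct_mulVec.mpr ⟨?_, ?_⟩
      · show (P - P * ΘN⁻¹ * P)ᴴ = _
        simp only [conjTranspose_sub, conjTranspose_mul, hPd.1.eq, hΘN.1.inv.eq,
          Matrix.mul_assoc]
      · intro x
        rw [star_id, sub_mulVec, dotProduct_sub]
        have he : (P * ΘN⁻¹ * P) *ᵥ x = P *ᵥ (ΘN⁻¹ *ᵥ (P *ᵥ x)) := by
          rw [mulVec_mulVec, mulVec_mulVec]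
        rw [he, ← sdot hPs x (ΘN⁻¹ *ᵥ (P *ᵥ x))]
        set v := P *ᵥ x with hv
        have hanti := (inv_antitone hPd hΘN (pert_le hNΘ hε)).dotProduct_mulVec_nonneg v
        rw [star_id, sub_mulVec, dotProduct_sub] at hanti
        have hPinv : v ⬝ᵥ (P⁻¹ *ᵥ v) = v ⬝ᵥ x := by
          rw [hv, mulVec_mulVec, nonsing_inv_mul _ hdet, one_mulVec]
        have hcomm : x ⬝ᵥ (P *ᵥ x) = v ⬝ᵥ x := by rw [hv, dotProduct_comm]
        linarith)
  simp only [pert_zero] at hmain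
  exact hmain

lemma det_unit {Θ ΘN Pm : Mat n} (hΘN : ΘN.PosDef) (hΘ : Θ.PosSemidef)
    (hNΘ : (ΘN - Θ).PosSemidef) (hlt : (ΘN⁻¹ - Pm).PosDef) :
    IsUnit (1 - Θ * Pm).det := by
  rw [isUnit_iff_ne_zero]
  intro hdet
  obtain ⟨v, hv, h0⟩ := (Matrix.exists_mulVec_eq_zero_iff (M := 1 - Θ * Pm)).mpr hdet
  rw [sub_mulVec, one_mulVec, sub_eq_zero] at h0
  -- h0 : v = (Θ * Pm) *ᵥ v
  set y := Pm *ᵥ v with hy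
  have hveq : Θ *ᵥ y = v := by rw [hy, mulVec_mulVec, ← h0]
  have hΘs : Θᵀ = Θ := herm_trans hΘ.1
  have hlt2 := hlt.dotProduct_mulVec_pos hv
  rw [star_id, sub_mulVec, dotProduct_sub] at hlt2
  have hconj := (conj_psd hΘN hΘ hNΘ).dotProduct_mulVec_nonneg y
  rw [star_id, sub_mulVec, dotProduct_sub] at hconj
  have he : (Θ * ΘN⁻¹ * Θ) *ᵥ y = Θ *ᵥ (ΘN⁻¹ *ᵥ v) := by
    conv_rhs => rw [← hveq]
    simp only [mulVec_mulVec, Matrix.mul_assoc]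
  rw [he, ← sdot hΘs y (ΘN⁻¹ *ᵥ v), hveq] at hconj
  have h1 : y ⬝ᵥ v = v ⬝ᵥ (Pm *ᵥ v) := dotProduct_comm y v
  linarith

lemma F_eq {Θ Pm : Mat n} (hΘ : Θ.PosDef) :
    (1 - Θ * Pm)⁻¹ * Θ = (Θ⁻¹ - Pm)⁻¹ := by
  have hd : IsUnit Θ.det := hΘ.det_pos.ne'.isUnit
  have h1 : Θ * (Θ⁻¹ - Pm) = 1 - Θ * Pm := by
    rw [Matrix.mul_sub, mul_nonsing_inv _ hd]
  rw [← h1, Matrix.mul_inv_rev, Matrix.mul_assoc, nonsing_inv_mul _ hd, Matrix.mul_one]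

lemma shift_posDef {Θ ΘN Pm : Mat n} (hΘ : Θ.PosDef) (hΘN : ΘN.PosDef)
    (hNΘ : (ΘN - Θ).PosSemidef) (hlt : (ΘN⁻¹ - Pm).PosDef) : (Θ⁻¹ - Pm).PosDef := by
  have h1 : (Θ⁻¹ - ΘN⁻¹) + (ΘN⁻¹ - Pm) = Θ⁻¹ - Pm := sub_add_sub_cancel _ _ _
  rw [← h1]
  exact Matrix.PosDef.posSemidef_add (inv_antitone hΘ hΘN hNΘ) hlt


/-- continuity at 0 of `ε ↦ (1 - pert(ε)·Pm)⁻¹ * pert(ε)` when `det (1 - Θ Pm)` is a unit. -/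
lemma F_continuousAt {Θ ΘN Pm : Mat n} (hdet : IsUnit (1 - Θ * Pm).det) :
    ContinuousAt (fun ε => (1 - pert Θ ΘN ε * Pm)⁻¹ * pert Θ ΘN ε) 0 := by
  have hp : Continuous (pert Θ ΘN) := pert_continuous Θ ΘN
  have hC : Continuous (fun ε => (1:Mat n) - pert Θ ΘN ε * Pm) :=
    continuous_const.sub (hp.matrix_mul continuous_const)
  have hC0 : (1:Mat n) - pert Θ ΘN 0 * Pm = 1 - Θ * Pm := by rw [pert_zero]
  have hinv : ContinuousAt Inv.inv ((1:Mat n) - pert Θ ΘN 0 * Pm) := by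
    apply continuousAt_matrix_inv
    rw [Ring.inverse_eq_inv']
    apply continuousAt_inv₀
    rw [hC0]
    exact hdet.ne_zero
  have h1 : ContinuousAt (fun ε => (1 - pert Θ ΘN ε * Pm)⁻¹) 0 :=
    ContinuousAt.comp (g := Inv.inv) (f := fun ε => 1 - pert Θ ΘN ε * Pm)
      hinv hC.continuousAt
  have hmul : Continuous (fun p : Mat n × Mat n => p.1 * p.2) :=
    continuous_fst.matrix_mul continuous_snd
  exact hmul.continuousAt.comp (h1.prodMk hp.continuousAt)


end Stmt16Aux

open Stmt16Aux

/-- Monotonicity of Θ ↦ (I − ΘΠ₀)⁻¹Θ on 0 ⪯ Θ_i ⪯ Θ_k ⪯ Θ_N when Π₀ ≺ Θ_N⁻¹. -/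
theorem stmt16 {n : ℕ} (ΘN Θk Θi Pi0 : Matrix (Fin n) (Fin n) ℝ)
    (hΘN : ΘN.PosDef) (hΘk : Θk.PosSemidef) (hΘi : Θi.PosSemidef)
    (hNk : (ΘN - Θk).PosSemidef) (hki : (Θk - Θi).PosSemidef)
    (hPi0 : Pi0ᵀ = Pi0) (hlt : (ΘN⁻¹ - Pi0).PosDef) :
    IsUnit (1 - Θk * Pi0).det ∧ IsUnit (1 - Θi * Pi0).det ∧
    ((1 - Θk * Pi0)⁻¹ * Θk - (1 - Θi * Pi0)⁻¹ * Θi).PosSemidef ∧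
    ((1 - Θi * Pi0)⁻¹ * Θi).PosSemidef := by
  have hNi : (ΘN - Θi).PosSemidef := by
    have h := hNk.add hki
    rwa [sub_add_sub_cancel] at h
  have hdetk : IsUnit (1 - Θk * Pi0).det := det_unit hΘN hΘk hNk hlt
  have hdeti : IsUnit (1 - Θi * Pi0).det := det_unit hΘN hΘi hNi hlt
  refine ⟨hdetk, hdeti, ?_, ?_⟩
  · have hmain := psd_limit
      (fun ε => (1 - pert Θk ΘN ε * Pi0)⁻¹ * pert Θk ΘN ε
        - (1 - pert Θi ΘN ε * Pi0)⁻¹ * pert Θi ΘN ε)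
      ((F_continuousAt (ΘN := ΘN) hdetk).sub (F_continuousAt (ΘN := ΘN) hdeti))
      (by
        intro ε hε
        have hKd : (pert Θk ΘN ε).PosDef := pert_posDef hΘk hΘN hε
        have hId : (pert Θi ΘN ε).PosDef := pert_posDef hΘi hΘN hε
        rw [F_eq hKd, F_eq hId]
        apply inv_antitone (shift_posDef hKd hΘN (pert_le hNk hε) hlt)
          (shift_posDef hId hΘN (pert_le hNi hε) hlt)
        have he : ((pert Θi ΘN ε)⁻¹ - Pi0) - ((pert Θk ΘN ε)⁻¹ - Pi0)
            = (pert Θi ΘN ε)⁻¹ - (pert Θk ΘN ε)⁻¹ := sub_sub_sub_cancel_right _ _ _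
        rw [he]
        apply inv_antitone hId hKd
        rw [pert_sub_pert]
        exact psd_smul hki (by linarith [hε.2]))
    simp only [pert_zero] at hmain
    exact hmain
  · have hmain := psd_limit (fun ε => (1 - pert Θi ΘN ε * Pi0)⁻¹ * pert Θi ΘN ε)
      (F_continuousAt (ΘN := ΘN) hdeti)
      (by
        intro ε hε
        have hId : (pert Θi ΘN ε).PosDef := pert_posDef hΘi hΘN hε
        rw [F_eq hId]
        exact (shift_posDef hId hΘN (pert_le hNi hε) hlt).inv.posSemidef)
    simp only [pert_zero] at hmain
    exact hmain
end

section
/- Let W ≺ 0 and each of W̃_0,…,W̃_{N−1} ⪯ 0 with W − W̃_i ⪯ 0 being symmetric n×n matrices, let Σ̄₀ ≻ 0, and let P_0,…,P_{N−1} ⪰ 0 be symmetric. Then for any nonzero n×n matrix X, trace( Xᵀ W X Σ̄₀ + Xᵀ Σ̄₀ X W + Σ_{i=0}^{N−1} [ Xᵀ(W − W̃_i) X P_i + Xᵀ P_i X (W − W̃_i) ] ) < 0. Consequently the symmetric n²×n² matrix S = Σ̄₀ ⊗ W + W ⊗ Σ̄₀ + Σ_i [ P_i ⊗ (W − W̃_i)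 + (W − W̃_i) ⊗ P_i ] is negative definite. -/
open Matrix Kronecker

private lemma diag_CBCt {m k : ℕ} (C : Matrix (Fin m) (Fin k) ℝ) (B : Matrix (Fin k) (Fin k) ℝ)
    (j : Fin m) : (C * B * Cᵀ) j j = C j ⬝ᵥ B *ᵥ C j := by
  simp only [Matrix.mul_apply, dotProduct, Matrix.mulVec, Matrix.transpose_apply,
    Finset.mul_sum, Finset.sum_mul, mul_assoc]
  rw [Finset.sum_comm]

private lemma trace_mul_nonneg' {m : ℕ} {A B : Matrix (Fin m) (Fin m) ℝ} (hA : A.PosSemidef)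
    (hB : B.PosSemidef) : 0 ≤ (A * B).trace := by
  obtain ⟨C, hC⟩ : ∃ C : Matrix (Fin m) (Fin m) ℝ, A = Cᴴ * C := by
    open MatrixOrder in exact CStarAlgebra.nonneg_iff_eq_star_mul_self.mp hA.nonneg
  have hCt : Cᴴ = Cᵀ := Matrix.conjTranspose_eq_transpose_of_trivial C
  rw [hC, hCt, Matrix.mul_assoc, Matrix.trace_mul_comm]
  rw [Matrix.trace]
  refine Finset.sum_nonneg fun j _ => ?_
  rw [Matrix.diag_apply, diag_CBCt]
  simpa using hB.dotProduct_mulVec_nonneg (C j)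

private lemma trace_mul_pos' {m : ℕ} {A B : Matrix (Fin m) (Fin m) ℝ} (hA : A.PosSemidef)
    (hA0 : A ≠ 0) (hB : B.PosDef) : 0 < (A * B).trace := by
  obtain ⟨C, hC⟩ : ∃ C : Matrix (Fin m) (Fin m) ℝ, A = Cᴴ * C := by
    open MatrixOrder in exact CStarAlgebra.nonneg_iff_eq_star_mul_self.mp hA.nonneg
  have hCt : Cᴴ = Cᵀ := Matrix.conjTranspose_eq_transpose_of_trivial C
  have hC0 : C ≠ 0 := by rintro rfl; simp at hC; exact hA0 hC
  obtain ⟨j, hj⟩ : ∃ j, C j ≠ 0 := by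
    by_contra h; push_neg at h; exact hC0 (by ext i j; simp [h])
  rw [hC, hCt, Matrix.mul_assoc, Matrix.trace_mul_comm]
  rw [Matrix.trace]
  refine Finset.sum_pos' (fun i _ => ?_) ⟨j, Finset.mem_univ j, ?_⟩
  · rw [Matrix.diag_apply, diag_CBCt]; simpa using hB.posSemidef.dotProduct_mulVec_nonneg (C i)
  · rw [Matrix.diag_apply, diag_CBCt]; simpa using hB.dotProduct_mulVec_pos hj

private lemma quad_kron {m : ℕ} (A B : Matrix (Fin m) (Fin m) ℝ) (x : Fin m × Fin m → ℝ) :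
    x ⬝ᵥ (A ⊗ₖ B) *ᵥ x =
      ((Matrix.of fun j i => x (i, j))ᵀ * B * (Matrix.of fun j i => x (i, j)) * Aᵀ).trace := by
  simp only [Matrix.trace, Matrix.diag_apply, Matrix.mul_apply, Matrix.transpose_apply,
    Matrix.of_apply, dotProduct, Matrix.mulVec, Matrix.kroneckerMap_apply,
    Fintype.sum_prod_type, Finset.mul_sum, Finset.sum_mul]
  refine Finset.sum_congr rfl fun a _ => ?_
  rw [Finset.sum_comm]
  refine Finset.sum_congr rfl fun c _ => ?_
  rw [Finset.sum_comm]
  refine Finset.sum_congr rfl fun d _ => ?_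
  refine Finset.sum_congr rfl fun b _ => ?_
  ring

private lemma dot_sum_mulVec {m : Type*} [Fintype m] {ι : Type*} [DecidableEq ι] (s : Finset ι)
    (M : ι → Matrix m m ℝ) (x : m → ℝ) :
    x ⬝ᵥ (∑ i ∈ s, M i) *ᵥ x = ∑ i ∈ s, x ⬝ᵥ (M i) *ᵥ x := by
  induction s using Finset.induction_on with
  | empty => simp [Matrix.zero_mulVec]
  | insert a s h ih => rw [Finset.sum_insert h, Finset.sum_insert h, Matrix.add_mulVec,
      dotProduct_add, ih]

private lemma psd_conj_s17 {m : ℕ} {A : Matrix (Fin m) (Fin m) ℝ} (hA : A.PosSemidef)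
    (X : Matrix (Fin m) (Fin m) ℝ) : (Xᵀ * A * X).PosSemidef := by
  have := hA.conjTranspose_mul_mul_same X
  rwa [Matrix.conjTranspose_eq_transpose_of_trivial] at this

/-- The key negativity estimate showing the Jacobian of the covariance map is
nonsingular: the trace form is negative on nonzero X, and the corresponding
Kronecker-product matrix S is negative definite. -/
theorem stmt17 {n N : ℕ} (W S0 : Matrix (Fin n) (Fin n) ℝ)
    (Wt P : ℕ → Matrix (Fin n) (Fin n) ℝ)
    (hW : (-W).PosDef) (hS0 : S0.PosDef)
    (hWt : ∀ i < N, (-(Wt i)).PosSemidef)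
    (hWWt : ∀ i < N, (Wt i - W).PosSemidef)
    (hP : ∀ i < N, (P i).PosSemidef) :
    (∀ X : Matrix (Fin n) (Fin n) ℝ, X ≠ 0 →
      (Xᵀ * W * X * S0 + Xᵀ * S0 * X * W +
        ∑ i ∈ Finset.range N,
          (Xᵀ * (W - Wt i) * X * P i + Xᵀ * P i * X * (W - Wt i))).trace < 0) ∧
    (-(S0 ⊗ₖ W + W ⊗ₖ S0 +
        ∑ i ∈ Finset.range N, (P i ⊗ₖ (W - Wt i) + (W - Wt i) ⊗ₖ P i))).PosDef := by
  -- symmetry facts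
  have hWs : Wᵀ = W := by
    have := hW.isHermitian
    rw [Matrix.IsHermitian, Matrix.conjTranspose_eq_transpose_of_trivial,
      Matrix.transpose_neg] at this
    exact neg_injective this
  have hS0s : S0ᵀ = S0 := by
    have := hS0.isHermitian
    rwa [Matrix.IsHermitian, Matrix.conjTranspose_eq_transpose_of_trivial] at this
  have hWWts : ∀ i < N, (W - Wt i)ᵀ = W - Wt i := by
    intro i hi
    have := (hWWt i hi).isHermitian
    rw [Matrix.IsHermitian, Matrix.conjTranspose_eq_transpose_of_trivial] at this
    have h2 : (-(Wt i - W))ᵀ = -(Wt i - W) := by rw [Matrix.transpose_neg, this]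
    simpa [neg_sub] using h2
  have hPs : ∀ i < N, (P i)ᵀ = P i := by
    intro i hi
    have := (hP i hi).isHermitian
    rwa [Matrix.IsHermitian, Matrix.conjTranspose_eq_transpose_of_trivial] at this
  have part1 : ∀ X : Matrix (Fin n) (Fin n) ℝ, X ≠ 0 →
      (Xᵀ * W * X * S0 + Xᵀ * S0 * X * W +
        ∑ i ∈ Finset.range N,
          (Xᵀ * (W - Wt i) * X * P i + Xᵀ * P i * X * (W - Wt i))).trace < 0 := by
    intro X hX
    have h1 : (Xᵀ * W * X * S0).trace < 0 := by
      have hM : (Xᵀ * (-W) * X).PosSemidef := psd_conj_s17 hW.posSemidef X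
      have hM0 : Xᵀ * (-W) * X ≠ 0 := by
        intro h0
        obtain ⟨i, j, hij⟩ : ∃ i j, X i j ≠ 0 := by
          by_contra h; push_neg at h; exact hX (by ext i j; simp [h])
        have hcol : Xᵀ j ≠ 0 := by
          intro hc; exact hij (by simpa [Matrix.transpose_apply] using congrFun hc i)
        have : (Xᵀ * (-W) * (Xᵀ)ᵀ) j j = Xᵀ j ⬝ᵥ (-W) *ᵥ Xᵀ j := diag_CBCt Xᵀ (-W) j
        rw [Matrix.transpose_transpose, h0] at this
        have hpos := hW.dotProduct_mulVec_pos hcol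
        simp only [star_trivial] at hpos
        rw [← this] at hpos
        simp at hpos
      have := trace_mul_pos' hM hM0 hS0
      have hneg : Xᵀ * (-W) * X * S0 = -(Xᵀ * W * X * S0) := by
        simp [Matrix.mul_neg, Matrix.neg_mul]
      rw [hneg, Matrix.trace_neg] at this
      linarith
    have h2 : (Xᵀ * S0 * X * W).trace ≤ 0 := by
      have := trace_mul_nonneg' (psd_conj_s17 hS0.posSemidef X) hW.posSemidef
      have hneg : Xᵀ * S0 * X * (-W) = -(Xᵀ * S0 * X * W) := by simp [Matrix.mul_neg]
      rw [hneg, Matrix.trace_neg] at this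
      linarith
    have h3 : ∀ i ∈ Finset.range N,
        (Xᵀ * (W - Wt i) * X * P i + Xᵀ * P i * X * (W - Wt i)).trace ≤ 0 := by
      intro i hi
      rw [Finset.mem_range] at hi
      have ha : (Xᵀ * (Wt i - W) * X * P i).trace ≥ 0 :=
        trace_mul_nonneg' (psd_conj_s17 (hWWt i hi) X) (hP i hi)
      have hb : (Xᵀ * P i * X * (Wt i - W)).trace ≥ 0 :=
        trace_mul_nonneg' (psd_conj_s17 (hP i hi) X) (hWWt i hi)
      have e1 : Xᵀ * (W - Wt i) * X * P i = -(Xᵀ * (Wt i - W) * X * P i) := by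
        have : W - Wt i = -(Wt i - W) := (neg_sub _ _).symm
        rw [this, Matrix.mul_neg, Matrix.neg_mul, Matrix.neg_mul]
      have e2 : Xᵀ * P i * X * (W - Wt i) = -(Xᵀ * P i * X * (Wt i - W)) := by
        have : W - Wt i = -(Wt i - W) := (neg_sub _ _).symm
        rw [this, Matrix.mul_neg]
      rw [Matrix.trace_add, e1, e2, Matrix.trace_neg, Matrix.trace_neg]
      linarith
    have hsum : (∑ i ∈ Finset.range N,
        (Xᵀ * (W - Wt i) * X * P i + Xᵀ * P i * X * (W - Wt i))).trace ≤ 0 := by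
      rw [Matrix.trace_sum]
      exact Finset.sum_nonpos h3
    rw [Matrix.trace_add, Matrix.trace_add]
    linarith
  refine ⟨part1, ?_⟩
  rw [posDef_iff_dotProduct_mulVec]
  constructor
  · -- Hermitian
    rw [Matrix.IsHermitian, Matrix.conjTranspose_eq_transpose_of_trivial, Matrix.transpose_neg]
    congr 1
    rw [Matrix.transpose_add, Matrix.transpose_add, ← Matrix.kroneckerMap_transpose,
      ← Matrix.kroneckerMap_transpose, hWs, hS0s, Matrix.transpose_sum]
    congr 1
    refine Finset.sum_congr rfl fun i hi => ?_
    rw [Finset.mem_range] at hi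
    rw [Matrix.transpose_add, ← Matrix.kroneckerMap_transpose, ← Matrix.kroneckerMap_transpose,
      hWWts i hi, hPs i hi]
  · -- positivity
    intro x hx
    simp only [star_trivial]
    set X : Matrix (Fin n) (Fin n) ℝ := Matrix.of fun j i => x (i, j) with hXdef
    have hX0 : X ≠ 0 := by
      intro h0
      apply hx
      funext p
      have := congrFun (congrFun h0 p.2) p.1
      simpa [hXdef] using this
    have key : x ⬝ᵥ (S0 ⊗ₖ W + W ⊗ₖ S0 +
        ∑ i ∈ Finset.range N, (P i ⊗ₖ (W - Wt i) + (W - Wt i) ⊗ₖ P i)) *ᵥ x =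
        (Xᵀ * W * X * S0 + Xᵀ * S0 * X * W +
        ∑ i ∈ Finset.range N,
          (Xᵀ * (W - Wt i) * X * P i + Xᵀ * P i * X * (W - Wt i))).trace := by
      rw [Matrix.add_mulVec, Matrix.add_mulVec, dotProduct_add, dotProduct_add,
        dot_sum_mulVec, Matrix.trace_add, Matrix.trace_add, Matrix.trace_sum]
      congr 1
      · congr 1
        · rw [quad_kron S0 W x, hS0s]
        · rw [quad_kron W S0 x, hWs]
      · refine Finset.sum_congr rfl fun i hi => ?_
        rw [Finset.mem_range] at hi
        rw [Matrix.add_mulVec, dotProduct_add, quad_kron (P i) (W - Wt i) x,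
          quad_kron (W - Wt i) (P i) x, hPs i hi, hWWts i hi, Matrix.trace_add]
    rw [Matrix.neg_mulVec, dotProduct_neg, key]
    have := part1 X hX0
    linarith
end
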